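/- Let n ≥ 2 and consider the pair n₁ = n−1, n₂ = n. Let S be the following finite set of ℝ-linear endomorphisms of B = ℝ[x₁,…,xₙ,y₁,…,yₙ]: f ↦ −x_i·∂f/∂x_r − y_i·∂f/∂y_r for 1 ≤ i < r ≤ n−1, and f ↦ −x_i·xₙ·f − y_i·∂f/∂yₙ for 1 ≤ i ≤ n−1. Let m₁, m₂ ∈ ℕ with m₂ ≤ m₁, set v = x_{n−1}^{m₁}·yₙ^{m₂}, and for k ∈ ℕ let W_k be the ℝ-linear span of all polynomials T₁(T₂(⋯T_j(v)⋯)) with 0 ≤ j ≤ k and T₁,…,T_j ∈ S. Then there exist real constants c₁, c₂ > 0 and K ∈ ℕ such that c₁·k^{n−1} ≤ dim W_k ≤ c₂·k^{n−1} for all k ≥ K. -/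

import Mathlib

open MvPolynomial

/-- Multiplication by a polynomial, as an ℝ-linear endomorphism. -/
noncomputable def mulE {σ : Type} (a : MvPolynomial σ ℝ) :
    Module.End ℝ (MvPolynomial σ ℝ) := LinearMap.mulLeft ℝ a

/-- Formal partial derivative ∂/∂v, as an ℝ-linear endomorphism. -/
noncomputable def pdE {σ : Type} [DecidableEq σ] (v : σ) :
    Module.End ℝ (MvPolynomial σ ℝ) := (pderiv v).toLinearMap

/-- The set S of negative-root-vector endomorphisms for the pair (n₁, n₂) = (n−1, n)
(x's are `Sum.inl`, y's `Sum.inr`, 0-based indexing: 1 ≤ i < r ≤ n−1 becomes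
i < r, r.val < n−1; the variable xₙ (resp. yₙ) is the `Fin n` element with value n−1). -/
def Sset (n : ℕ) (h : 2 ≤ n) : Set (Module.End ℝ (MvPolynomial (Fin n ⊕ Fin n) ℝ)) :=
  {T | (∃ i r : Fin n, i < r ∧ r.val < n - 1 ∧
          T = -(mulE (X (Sum.inl i)) * pdE (Sum.inl r))
                - mulE (X (Sum.inr i)) * pdE (Sum.inr r)) ∨
       (∃ i : Fin n, i.val < n - 1 ∧
          T = -mulE (X (Sum.inl i) * X (Sum.inl (⟨n - 1, by omega⟩ : Fin n)))
                - mulE (X (Sum.inr i)) * pdE (Sum.inr (⟨n - 1, by omega⟩ : Fin n)))}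

/-- W_k: span of all T₁(T₂(⋯T_j(v)⋯)) with 0 ≤ j ≤ k, T's in S. -/
noncomputable def Wk (n : ℕ) (S : Set (Module.End ℝ (MvPolynomial (Fin n ⊕ Fin n) ℝ)))
    (v : MvPolynomial (Fin n ⊕ Fin n) ℝ) (k : ℕ) :
    Submodule ℝ (MvPolynomial (Fin n ⊕ Fin n) ℝ) :=
  Submodule.span ℝ
    {f | ∃ l : List (Module.End ℝ (MvPolynomial (Fin n ⊕ Fin n) ℝ)),
      l.length ≤ k ∧ (∀ T ∈ l, T ∈ S) ∧ f = l.prod v}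

/-!
Every operator in `S` sends a monomial to a combination of at most two monomials and preserves
two gradings: the total `y`-degree, and the degree in `x₁, …, x_{n-1}` minus the degree in `xₙ`;
moreover it raises the `xₙ`-degree by at most one. Hence `W_k` lies in the span of the monomials
of `y`-degree `m₂`, `xₙ`-degree `e ≤ k` and `(x₁, …, x_{n-1})`-degree `m₁ + e`. Such a monomial is
determined by its exponents of `x₁, …, x_{n-1}` (at most `m₁ + k`) and of `y₁, …, yₙ` (at most
`m₂`), which gives the upper bound `O(k^{n-1})`.

For the lower bound, after substituting `y₁ = ⋯ = y_{n-1} = 0` the operator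
`−xᵢxₙ − yᵢ ∂/∂yₙ` acts as multiplication by `−xᵢxₙ`. So the image of `W_k` under this
substitution contains the distinct monomials `∏ᵢ (xᵢxₙ)^{aᵢ} · v` with `∑ aᵢ ≤ k`, and there are
at least `(k/(n-1))^{n-1}` of them.
-/

namespace Finsupp

variable {σ M : Type*} [AddCommMonoid M] {w : σ → M}

lemma weight_sub_single_add_single {f : σ →₀ ℕ} {u v : σ} (hv : f v ≠ 0) (h : w u = w v) :
    weight w (f - single v 1 + single u 1) = weight w f := by
  rw [map_add, weight_single, one_smul, h, weight_sub_single_add hv]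

lemma weight_congr [Fintype σ] {f g : σ →₀ ℕ} (h : ∀ a, w a ≠ 0 → f a = g a) :
    weight w f = weight w g := by
  simp only [weight_eq_sum]
  refine Finset.sum_congr rfl fun a _ => ?_
  by_cases ha : w a = 0
  · simp [ha]
  · rw [h a ha]

end Finsupp

namespace MvPolynomial

variable {σ R : Type*} [CommSemiring R]

lemma restrictSupport_le_comap_of_monomial {s t : Set (σ →₀ ℕ)}
    {f : MvPolynomial σ R →ₗ[R] MvPolynomial σ R}
    (h : ∀ d ∈ s, f (monomial d 1) ∈ restrictSupport R t) :
    restrictSupport R s ≤ (restrictSupport R t).comap f := by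
  rw [restrictSupport_eq_span, Submodule.span_le]
  rintro _ ⟨d, hd, rfl⟩
  exact h d hd

lemma finite_restrictSupport {s : Set (σ →₀ ℕ)} (hs : s.Finite) :
    Module.Finite R (restrictSupport R s) :=
  have := hs.to_subtype
  .of_basis (basisRestrictSupport R s)

lemma finrank_restrictSupport [Nontrivial R] {s : Set (σ →₀ ℕ)} (hs : s.Finite) :
    Module.finrank R (restrictSupport R s) = s.ncard := by
  have := hs.to_subtype
  rw [Module.finrank_eq_nat_card_basis (basisRestrictSupport R s), Nat.card_coe_set_eq]

end MvPolynomial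

open MvPolynomial

section Operators

variable {σ : Type}

lemma mulE_monomial (e d : σ →₀ ℕ) (c : ℝ) :
    mulE (monomial e 1) (monomial d c) = monomial (d + e) c := by
  simp [mulE, monomial_mul, add_comm]

variable [DecidableEq σ]

lemma mulE_X_mul_pdE_monomial (u v : σ) (d : σ →₀ ℕ) (c : ℝ) :
    (mulE (X u) * pdE v) (monomial d c) =
      monomial (d - Finsupp.single v 1 + Finsupp.single u 1) (c * d v) := by
  simp [mulE, pdE, pderiv_monomial, X, monomial_mul, add_comm]

lemma restrictSupport_le_comap_mulE_X_mul_pdE {s : Set (σ →₀ ℕ)} {u v : σ}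
    (h : ∀ d ∈ s, d v ≠ 0 → d - Finsupp.single v 1 + Finsupp.single u 1 ∈ s) :
    restrictSupport ℝ s ≤ (restrictSupport ℝ s).comap (mulE (X u) * pdE v) := by
  refine restrictSupport_le_comap_of_monomial fun d hd => ?_
  rw [mulE_X_mul_pdE_monomial, monomial_mem_restrictSupport]
  by_cases hv : d v = 0
  · simp [hv]
  · exact .inl (h d hd hv)

end Operators

section Wk

variable {n : ℕ} {S : Set (Module.End ℝ (MvPolynomial (Fin n ⊕ Fin n) ℝ))}
  {v : MvPolynomial (Fin n ⊕ Fin n) ℝ}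

lemma Wk_mono {k k' : ℕ} (h : k ≤ k') : Wk n S v k ≤ Wk n S v k' :=
  Submodule.span_mono fun _ ⟨l, hl, hS, hf⟩ => ⟨l, hl.trans h, hS, hf⟩

lemma apply_mem_Wk {T : Module.End ℝ (MvPolynomial (Fin n ⊕ Fin n) ℝ)} (hT : T ∈ S) {k : ℕ}
    {f : MvPolynomial (Fin n ⊕ Fin n) ℝ} (hf : f ∈ Wk n S v k) : T f ∈ Wk n S v (k + 1) := by
  suffices Wk n S v k ≤ (Wk n S v (k + 1)).comap T from this hf
  rw [Wk, Submodule.span_le]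
  rintro _ ⟨l, hl, hlS, rfl⟩
  refine Submodule.subset_span ⟨T :: l, by simpa, ?_, by simp [Module.End.mul_apply]⟩
  simpa [hT] using hlS

lemma Wk_le_of_le_comap {P : ℕ → Submodule ℝ (MvPolynomial (Fin n ⊕ Fin n) ℝ)} (hP : Monotone P)
    (hv : v ∈ P 0) (hS : ∀ T ∈ S, ∀ k, P k ≤ (P (k + 1)).comap T) (k : ℕ) : Wk n S v k ≤ P k := by
  rw [Wk, Submodule.span_le]
  rintro _ ⟨l, hl, hlS, rfl⟩
  refine hP hl ?_
  clear hl
  induction l with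
  | nil => simpa using hv
  | cons T l ih =>
    rw [List.prod_cons, Module.End.mul_apply]
    exact hS T (hlS T (by simp)) _ (ih fun U hU => hlS U (by simp [hU]))

end Wk

lemma nsmul_add_mem_of_add_mem {E : Type*} [AddCommMonoid E] {A : ℕ → Set E} {f : E}
    (h : ∀ k, ∀ e ∈ A k, f + e ∈ A (k + 1)) {k : ℕ} {e : E} (he : e ∈ A k) (m : ℕ) :
    m • f + e ∈ A (k + m) := by
  induction m with
  | zero => simpa
  | succ m ih => simpa [succ_nsmul', add_assoc] using h _ _ ih

lemma sum_nsmul_add_mem_of_add_mem {ι E : Type*} [AddCommMonoid E] {A : ℕ → Set E} {f : ι → E}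
    (h : ∀ i k, ∀ e ∈ A k, f i + e ∈ A (k + 1)) {k : ℕ} {e : E} (he : e ∈ A k) (s : Finset ι)
    (a : ι → ℕ) : ∑ i ∈ s, a i • f i + e ∈ A (k + ∑ i ∈ s, a i) := by
  classical
  induction s using Finset.induction_on with
  | empty => simpa
  | insert i s hi ih =>
    rw [Finset.sum_insert hi, Finset.sum_insert hi, add_assoc, add_left_comm, add_comm (a i)]
    exact nsmul_add_mem_of_add_mem (h i) ih (a i)

namespace Oscillator

open Finsupp (single weight)

variable {n : ℕ} (hn : 2 ≤ n) (p : Fin n) (m₁ m₂ : ℕ)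

def lastIdx : Fin n := ⟨n - 1, by omega⟩

lemma val_lt_iff_ne_lastIdx {i : Fin n} : i.val < n - 1 ↔ i ≠ lastIdx hn := by
  simp only [Ne, Fin.ext_iff, lastIdx]
  omega

noncomputable def highestWeightVector : MvPolynomial (Fin n ⊕ Fin n) ℝ :=
  X (.inl p) ^ m₁ * X (.inr (lastIdx hn)) ^ m₂

noncomputable def highestExponent : (Fin n ⊕ Fin n) →₀ ℕ :=
  single (.inl p) m₁ + single (.inr (lastIdx hn)) m₂

lemma highestWeightVector_eq :
    highestWeightVector hn p m₁ m₂ = monomial (highestExponent hn p m₁ m₂) 1 := by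
  rw [highestWeightVector, X_pow_eq_monomial, X_pow_eq_monomial, monomial_mul, one_mul,
    highestExponent]

def xWeight : Fin n ⊕ Fin n → ℕ := Sum.elim (fun i => if i = lastIdx hn then 0 else 1) 0

def yWeight : Fin n ⊕ Fin n → ℕ := Sum.elim 0 1

def admissible (k : ℕ) : Set ((Fin n ⊕ Fin n) →₀ ℕ) :=
  {d | weight yWeight d = m₂ ∧ weight (xWeight hn) d = m₁ + d (.inl (lastIdx hn)) ∧
    d (.inl (lastIdx hn)) ≤ k}

variable {hn p m₁ m₂}

lemma admissible_mono {k k' : ℕ} (h : k ≤ k') : admissible hn m₁ m₂ k ⊆ admissible hn m₁ m₂ k' :=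
  fun _ ⟨hy, hx, hk⟩ => ⟨hy, hx, hk.trans h⟩

lemma highestExponent_mem_admissible (hp : p ≠ lastIdx hn) :
    highestExponent hn p m₁ m₂ ∈ admissible hn m₁ m₂ 0 := by
  simp [admissible, highestExponent, xWeight, yWeight, Finsupp.weight_single, hp, hp.symm]

lemma sub_single_add_single_mem_admissible {k : ℕ} {d : (Fin n ⊕ Fin n) →₀ ℕ}
    (hd : d ∈ admissible hn m₁ m₂ k) {u v : Fin n ⊕ Fin n} (hv : d v ≠ 0)
    (hu : u ≠ .inl (lastIdx hn)) (hv' : v ≠ .inl (lastIdx hn))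
    (hx : xWeight hn u = xWeight hn v) (hy : yWeight u = yWeight v) :
    d - single v 1 + single u 1 ∈ admissible hn m₁ m₂ k := by
  obtain ⟨hdy, hdx, hdk⟩ := hd
  have hlast : (d - single v 1 + single u 1 : (Fin n ⊕ Fin n) →₀ ℕ) (.inl (lastIdx hn)) =
      d (.inl (lastIdx hn)) := by
    simp [hu.symm, hv'.symm]
  exact ⟨(Finsupp.weight_sub_single_add_single hv hy).trans hdy,
    by rw [Finsupp.weight_sub_single_add_single hv hx, hlast, hdx], hlast ▸ hdk⟩

lemma restrictSupport_admissible_le_comap_mulE_X_mul_pdE {k : ℕ} {u v : Fin n ⊕ Fin n}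
    (hu : u ≠ .inl (lastIdx hn)) (hv : v ≠ .inl (lastIdx hn))
    (hx : xWeight hn u = xWeight hn v) (hy : yWeight u = yWeight v) :
    restrictSupport ℝ (admissible hn m₁ m₂ k) ≤
      (restrictSupport ℝ (admissible hn m₁ m₂ (k + 1))).comap (mulE (X u) * pdE v) :=
  (restrictSupport_le_comap_mulE_X_mul_pdE fun _ hd hdv =>
    sub_single_add_single_mem_admissible hd hdv hu hv hx hy).trans
    (Submodule.comap_mono (restrictSupport_mono ℝ (admissible_mono k.le_succ)))

lemma restrictSupport_admissible_le_comap_mulE_X_mul_X {k : ℕ} (i : Fin n) (hi : i ≠ lastIdx hn) :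
    restrictSupport ℝ (admissible hn m₁ m₂ k) ≤
      (restrictSupport ℝ (admissible hn m₁ m₂ (k + 1))).comap
        (mulE (X (.inl i) * X (.inl (lastIdx hn)))) := by
  refine restrictSupport_le_comap_of_monomial fun d ⟨hdy, hdx, hdk⟩ => ?_
  rw [X, X, monomial_mul, one_mul, mulE_monomial, monomial_mem_restrictSupport]
  refine .inl ⟨?_, ?_, ?_⟩
  all_goals simp [xWeight, yWeight, Finsupp.weight_single, hi, Ne.symm hi] at hdy hdx ⊢
  all_goals omega

lemma restrictSupport_admissible_le_comap {k : ℕ}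
    {T : Module.End ℝ (MvPolynomial (Fin n ⊕ Fin n) ℝ)} (hT : T ∈ Sset n hn) :
    restrictSupport ℝ (admissible hn m₁ m₂ k) ≤
      (restrictSupport ℝ (admissible hn m₁ m₂ (k + 1))).comap T := by
  intro f hf
  simp only [Submodule.mem_comap]
  rcases hT with ⟨i, r, hir, hr, rfl⟩ | ⟨i, hi, rfl⟩
  · have hi : i ≠ lastIdx hn := (val_lt_iff_ne_lastIdx hn).1 ((Fin.lt_def.1 hir).trans hr)
    rw [val_lt_iff_ne_lastIdx hn] at hr
    simp only [LinearMap.sub_apply, LinearMap.neg_apply]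
    refine Submodule.sub_mem _ (Submodule.neg_mem _ ?_) ?_
    · exact restrictSupport_admissible_le_comap_mulE_X_mul_pdE (u := .inl i) (v := .inl r)
        (by simpa) (by simpa) (by simp [xWeight, hi, hr]) rfl hf
    · exact restrictSupport_admissible_le_comap_mulE_X_mul_pdE (u := .inr i) (v := .inr r)
        (by simp) (by simp) rfl rfl hf
  · rw [val_lt_iff_ne_lastIdx hn] at hi
    simp only [LinearMap.sub_apply, LinearMap.neg_apply]
    exact Submodule.sub_mem _ (Submodule.neg_mem _
      (restrictSupport_admissible_le_comap_mulE_X_mul_X i hi hf))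
      (restrictSupport_admissible_le_comap_mulE_X_mul_pdE (u := .inr i) (v := .inr (lastIdx hn))
        (by simp) (by simp) rfl rfl hf)

lemma Wk_le_restrictSupport_admissible (hp : p ≠ lastIdx hn) (k : ℕ) :
    Wk n (Sset n hn) (highestWeightVector hn p m₁ m₂) k ≤
      restrictSupport ℝ (admissible hn m₁ m₂ k) :=
  Wk_le_of_le_comap (fun _ _ h => restrictSupport_mono ℝ (admissible_mono h))
    (by rw [highestWeightVector_eq, monomial_mem_restrictSupport]
        exact .inl (highestExponent_mem_admissible hp))
    (fun _ hT _ => restrictSupport_admissible_le_comap hT) k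

variable (hn) in
def forgetLast (d : (Fin n ⊕ Fin n) →₀ ℕ) : ({j : Fin n // j ≠ lastIdx hn} → ℕ) × (Fin n → ℕ) :=
  (fun j => d (.inl j), fun i => d (.inr i))

lemma forgetLast_mem {k : ℕ} {d : (Fin n ⊕ Fin n) →₀ ℕ} (hd : d ∈ admissible hn m₁ m₂ k) :
    forgetLast hn d ∈ Fintype.piFinset (fun _ => Finset.range (m₁ + k + 1)) ×ˢ
      Fintype.piFinset (fun _ => Finset.range (m₂ + 1)) := by
  obtain ⟨hdy, hdx, hdk⟩ := hd
  simp only [forgetLast, Finset.mem_product, Fintype.mem_piFinset, Finset.mem_range]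
  refine ⟨fun j => ?_, fun i => ?_⟩
  · have := Finsupp.le_weight (xWeight hn) (s := .inl j) (by simp [xWeight, j.2]) d
    omega
  · have := Finsupp.le_weight yWeight (s := .inr i) (by simp [yWeight]) d
    omega

lemma injOn_forgetLast (k : ℕ) : Set.InjOn (forgetLast hn) (admissible hn m₁ m₂ k) := by
  intro d ⟨_, hdx, _⟩ e ⟨_, hex, _⟩ hde
  simp only [forgetLast, Prod.mk.injEq, funext_iff] at hde
  have hx : ∀ j : Fin n, j ≠ lastIdx hn → d (.inl j) = e (.inl j) := fun j hj => hde.1 ⟨j, hj⟩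
  have hlast : d (.inl (lastIdx hn)) = e (.inl (lastIdx hn)) := by
    have : weight (xWeight hn) d = weight (xWeight hn) e := Finsupp.weight_congr fun
      | .inl j, h => hx j (by simpa [xWeight] using h)
      | .inr _, h => absurd rfl h
    omega
  ext (j | i)
  · by_cases hj : j = lastIdx hn
    · exact hj ▸ hlast
    · exact hx j hj
  · exact hde.2 i

lemma admissible_finite (k : ℕ) : (admissible hn m₁ m₂ k).Finite :=
  .of_finite_image ((Finset.finite_toSet _).subset (Set.image_subset_iff.2 fun _ => forgetLast_mem))
    (injOn_forgetLast k)

lemma ncard_admissible_le (k : ℕ) :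
    (admissible hn m₁ m₂ k).ncard ≤ (m₁ + k + 1) ^ (n - 1) * (m₂ + 1) ^ n := by
  calc _ ≤ (_ : Finset _).card := (Set.ncard_le_ncard_of_injOn _ (fun _ => forgetLast_mem)
        (injOn_forgetLast k)).trans_eq (Set.ncard_coe_finset _)
    _ = _ := by simp

lemma finite_Wk (hp : p ≠ lastIdx hn) (k : ℕ) :
    Module.Finite ℝ (Wk n (Sset n hn) (highestWeightVector hn p m₁ m₂) k) :=
  have := finite_restrictSupport (R := ℝ) (admissible_finite (hn := hn) (m₁ := m₁) (m₂ := m₂) k)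
  Submodule.finiteDimensional_of_le (Wk_le_restrictSupport_admissible hp k)

lemma finrank_Wk_le (hp : p ≠ lastIdx hn) (k : ℕ) :
    Module.finrank ℝ (Wk n (Sset n hn) (highestWeightVector hn p m₁ m₂) k) ≤
      (m₁ + k + 1) ^ (n - 1) * (m₂ + 1) ^ n := by
  have := finite_restrictSupport (R := ℝ) (admissible_finite (hn := hn) (m₁ := m₁) (m₂ := m₂) k)
  calc _ ≤ Module.finrank ℝ (restrictSupport ℝ (admissible hn m₁ m₂ k)) :=
        Submodule.finrank_mono (Wk_le_restrictSupport_admissible hp k)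
    _ = (admissible hn m₁ m₂ k).ncard := finrank_restrictSupport (admissible_finite k)
    _ ≤ _ := ncard_admissible_le k

variable (hn) in
noncomputable def killY : MvPolynomial (Fin n ⊕ Fin n) ℝ →ₐ[ℝ] MvPolynomial (Fin n ⊕ Fin n) ℝ :=
  aeval (Sum.elim (fun i => X (.inl i)) fun i => if i = lastIdx hn then X (.inr i) else 0)

variable (hn) in
noncomputable def lastRootOp (i : Fin n) : Module.End ℝ (MvPolynomial (Fin n ⊕ Fin n) ℝ) :=
  -mulE (X (.inl i) * X (.inl (lastIdx hn))) - mulE (X (.inr i)) * pdE (.inr (lastIdx hn))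

lemma lastRootOp_mem_Sset {i : Fin n} (hi : i ≠ lastIdx hn) : lastRootOp hn i ∈ Sset n hn :=
  .inr ⟨i, (val_lt_iff_ne_lastIdx hn).2 hi, rfl⟩

lemma killY_lastRootOp {i : Fin n} (hi : i ≠ lastIdx hn) (f : MvPolynomial (Fin n ⊕ Fin n) ℝ) :
    killY hn (lastRootOp hn i f) = -(X (.inl i) * X (.inl (lastIdx hn)) * killY hn f) := by
  simp [killY, lastRootOp, mulE, pdE, hi, mul_assoc]

lemma killY_highestWeightVector :
    killY hn (highestWeightVector hn p m₁ m₂) = highestWeightVector hn p m₁ m₂ := by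
  simp [killY, highestWeightVector, lastIdx]

variable (hn p m₁ m₂) in
noncomputable def descendantExponent (a : {j : Fin n // j ≠ lastIdx hn} → ℕ) :
    (Fin n ⊕ Fin n) →₀ ℕ :=
  ∑ j, a j • (single (.inl ↑j) 1 + single (.inl (lastIdx hn)) 1) + highestExponent hn p m₁ m₂

lemma monomial_descendantExponent_mem (a : {j : Fin n // j ≠ lastIdx hn} → ℕ) :
    monomial (descendantExponent hn p m₁ m₂ a) 1 ∈
      (Wk n (Sset n hn) (highestWeightVector hn p m₁ m₂) (∑ j, a j)).map
        (killY hn).toLinearMap := by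
  let A (k : ℕ) : Set ((Fin n ⊕ Fin n) →₀ ℕ) := {e | monomial e 1 ∈
    (Wk n (Sset n hn) (highestWeightVector hn p m₁ m₂) k).map (killY hn).toLinearMap}
  have hstep (j : {j : Fin n // j ≠ lastIdx hn}) (k : ℕ) (e) (he : e ∈ A k) :
      single (.inl ↑j) 1 + single (.inl (lastIdx hn)) 1 + e ∈ A (k + 1) := by
    obtain ⟨f, hf, hfe⟩ := he
    refine ⟨-lastRootOp hn j f, Submodule.neg_mem _ (apply_mem_Wk (lastRootOp_mem_Sset j.2) hf), ?_⟩
    simp only [AlgHom.toLinearMap_apply, map_neg, killY_lastRootOp j.2, neg_neg] at hfe ⊢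
    rw [hfe, X, X, monomial_mul, monomial_mul]
    simp [add_assoc]
  have h0 : highestExponent hn p m₁ m₂ ∈ A 0 :=
    ⟨highestWeightVector hn p m₁ m₂, Submodule.subset_span ⟨[], by simp, by simp, by simp⟩,
      (killY_highestWeightVector.trans (highestWeightVector_eq hn p m₁ m₂))⟩
  have := sum_nsmul_add_mem_of_add_mem hstep h0 Finset.univ a
  rwa [zero_add] at this

lemma descendantExponent_injective : Function.Injective (descendantExponent hn p m₁ m₂) := by
  intro a b hab
  funext j
  have := congr($hab (.inl ↑j))
  simpa [descendantExponent, Finsupp.single_apply, j.2, ← Subtype.ext_iff] using this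

lemma pow_le_finrank_Wk (hp : p ≠ lastIdx hn) {t k : ℕ} (h : (n - 1) * t ≤ k) :
    (t + 1) ^ (n - 1) ≤ Module.finrank ℝ (Wk n (Sset n hn) (highestWeightVector hn p m₁ m₂) k) := by
  have := finite_Wk (m₁ := m₁) (m₂ := m₂) hp k
  let g (a : {j : Fin n // j ≠ lastIdx hn} → Fin (t + 1)) : MvPolynomial (Fin n ⊕ Fin n) ℝ :=
    monomial (descendantExponent hn p m₁ m₂ fun j => a j) 1
  have hinj : Function.Injective fun a : {j : Fin n // j ≠ lastIdx hn} → Fin (t + 1) =>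
      descendantExponent hn p m₁ m₂ fun j => a j :=
    descendantExponent_injective.comp fun a b hab => funext fun j => Fin.ext (congrFun hab j)
  have hg : LinearIndependent ℝ g := by
    have := (basisMonomials (Fin n ⊕ Fin n) ℝ).linearIndependent.comp _ hinj
    rwa [coe_basisMonomials] at this
  have hspan : Submodule.span ℝ (Set.range g) ≤
      (Wk n (Sset n hn) (highestWeightVector hn p m₁ m₂) k).map (killY hn).toLinearMap := by
    rw [Submodule.span_le]
    rintro _ ⟨a, rfl⟩
    refine Submodule.map_mono (Wk_mono ?_) (monomial_descendantExponent_mem _)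
    calc ∑ j, (a j : ℕ) ≤ ∑ _j : {j : Fin n // j ≠ lastIdx hn}, t :=
          Finset.sum_le_sum fun j _ => Nat.lt_succ_iff.1 (a j).2
      _ = (n - 1) * t := by simp
      _ ≤ k := h
  calc (t + 1) ^ (n - 1) = Module.finrank ℝ (Submodule.span ℝ (Set.range g)) := by
        simp [finrank_span_eq_card hg]
    _ ≤ _ := Submodule.finrank_mono hspan
    _ ≤ _ := Submodule.finrank_map_le _ _

lemma inv_pow_mul_pow_le_finrank_Wk (hp : p ≠ lastIdx hn) (k : ℕ) :
    ((n - 1 : ℕ) : ℝ)⁻¹ ^ (n - 1) * (k : ℝ) ^ (n - 1) ≤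
      Module.finrank ℝ (Wk n (Sset n hn) (highestWeightVector hn p m₁ m₂) k) := by
  have hpos : (0 : ℝ) < (n - 1 : ℕ) := by exact_mod_cast (by omega : 0 < n - 1)
  have hk : (k : ℝ) ≤ (n - 1 : ℕ) * (k / (n - 1) + 1 : ℕ) := by
    exact_mod_cast (Nat.lt_mul_div_succ k (by omega : 0 < n - 1)).le
  calc ((n - 1 : ℕ) : ℝ)⁻¹ ^ (n - 1) * (k : ℝ) ^ (n - 1)
      = ((k : ℝ) / (n - 1 : ℕ)) ^ (n - 1) := by rw [div_eq_inv_mul, mul_pow]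
    _ ≤ ((k / (n - 1) + 1 : ℕ) : ℝ) ^ (n - 1) := by
        gcongr
        rwa [div_le_iff₀' hpos]
    _ ≤ _ := by exact_mod_cast pow_le_finrank_Wk hp (Nat.mul_div_le k (n - 1))

lemma finrank_Wk_le_mul_pow (hp : p ≠ lastIdx hn) {k : ℕ} (hk : m₁ + 1 ≤ k) :
    (Module.finrank ℝ (Wk n (Sset n hn) (highestWeightVector hn p m₁ m₂) k) : ℝ) ≤
      2 ^ (n - 1) * ((m₂ : ℝ) + 1) ^ n * (k : ℝ) ^ (n - 1) := by
  have : (m₁ + k + 1) ^ (n - 1) * (m₂ + 1) ^ n ≤ (2 * k) ^ (n - 1) * (m₂ + 1) ^ n := by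
    gcongr
    omega
  calc _ ≤ (((2 * k) ^ (n - 1) * (m₂ + 1) ^ n : ℕ) : ℝ) := by
        exact_mod_cast (finrank_Wk_le hp k).trans this
    _ = _ := by push_cast; ring

end Oscillator

/-- v = x_{n−1}^{m₁} yₙ^{m₂} (0-based: x-index n−2, y-index n−1). -/
theorem stmt_12 (n m₁ m₂ : ℕ) (hn : 2 ≤ n) :
    ∃ c₁ c₂ : ℝ, 0 < c₁ ∧ 0 < c₂ ∧ ∃ K : ℕ, ∀ k ≥ K,
      c₁ * (k : ℝ) ^ (n - 1) ≤
        (Module.finrank ℝ (Wk n (Sset n hn)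
          (X (Sum.inl (⟨n - 2, by omega⟩ : Fin n)) ^ m₁ *
            X (Sum.inr (⟨n - 1, by omega⟩ : Fin n)) ^ m₂) k) : ℝ) ∧
      (Module.finrank ℝ (Wk n (Sset n hn)
          (X (Sum.inl (⟨n - 2, by omega⟩ : Fin n)) ^ m₁ *
            X (Sum.inr (⟨n - 1, by omega⟩ : Fin n)) ^ m₂) k) : ℝ) ≤
        c₂ * (k : ℝ) ^ (n - 1) := by
  have hp : (⟨n - 2, by omega⟩ : Fin n) ≠ Oscillator.lastIdx hn := by
    simp only [Ne, Fin.ext_iff, Oscillator.lastIdx]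
    omega
  have hpos : (0 : ℝ) < (n - 1 : ℕ) := by exact_mod_cast (by omega : 0 < n - 1)
  exact ⟨((n - 1 : ℕ) : ℝ)⁻¹ ^ (n - 1), 2 ^ (n - 1) * ((m₂ : ℝ) + 1) ^ n, by positivity,
    by positivity, m₁ + 1, fun k hk =>
    ⟨Oscillator.inv_pow_mul_pow_le_finrank_Wk hp k, Oscillator.finrank_Wk_le_mul_pow hp hk⟩⟩
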